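/- Let N be a rooted phylogenetic network on a finite set X and let Ñ be its normalisation. Then Ñ has no vertex whose in-degree and out-degree are both at least 2. -/

import Mathlib

/-!
Formalisation framework for rooted phylogenetic networks.

A network is represented as a directed graph on an ambient vertex type `V`:
a vertex set `verts`, a root vertex `root`, and an arc relation `arc`.
-/

structure Net (V : Type*) where
  verts : Set V
  root : V
  arc : V → V → Prop

namespace Net

variable {V : Type*} {W : Type*}

/-- `N.reach u v` means there is a (possibly empty) directed path from `u` to `v`. -/
def reach (N : Net V) : V → V → Prop := Relation.ReflTransGen N.arc

/-- The in-degree of a vertex. -/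
noncomputable def inDeg (N : Net V) (v : V) : ℕ := {u | N.arc u v}.ncard

/-- The out-degree of a vertex. -/
noncomputable def outDeg (N : Net V) (v : V) : ℕ := {w | N.arc v w}.ncard

/-- The leaves of `N`: the vertices of out-degree 0. -/
def leaves (N : Net V) : Set V := {v ∈ N.verts | N.outDeg v = 0}

/-- `N.IsPathFrom u v l` : the list `l` is a directed path in `N` from `u` to `v`
(consecutive entries joined by arcs; a one-element list is the empty path). -/
def IsPathFrom (N : Net V) (u v : V) (l : List V) : Prop :=
  l.Chain' N.arc ∧ l.head? = some u ∧ l.getLast? = some v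

/-- A vertex is visible if some leaf is such that every directed path from the
root to that leaf passes through the vertex. -/
def Visible (N : Net V) (x : V) : Prop :=
  x ∈ N.verts ∧ ∃ y ∈ N.leaves, ∀ l : List V, N.IsPathFrom N.root y l → x ∈ l

/-- A subdividing vertex is one of in-degree 1 and out-degree 1. -/
def Subdividing (N : Net V) (v : V) : Prop := N.inDeg v = 1 ∧ N.outDeg v = 1

/-- The digraph `Cov(N)` on the visible vertices of `N`: an arc `(u,v)` whenever
`u ≠ v`, `u →_N v`, and no visible vertex lies strictly between `u` and `v`. -/
def cov (N : Net V) : Net V where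
  verts := {v | N.Visible v}
  root := N.root
  arc u v := N.Visible u ∧ N.Visible v ∧ u ≠ v ∧ N.reach u v ∧
    ¬ ∃ w, N.Visible w ∧ w ≠ u ∧ w ≠ v ∧ N.reach u w ∧ N.reach w v

/-- The normalisation `Ñ` of `N`: obtained from `Cov(N)` by suppressing every
subdividing vertex.  Its vertices are the visible vertices of `N` that are not
subdividing in `Cov(N)`, with an arc `(u,v)` whenever `Cov(N)` has a directed path
from `u` to `v` (of length at least one) all of whose interior vertices are
subdividing in `Cov(N)`. -/
def normalise (N : Net V) : Net V where
  verts := {v | N.Visible v ∧ ¬ N.cov.Subdividing v}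
  root := N.root
  arc u v := (N.Visible u ∧ ¬ N.cov.Subdividing u) ∧ (N.Visible v ∧ ¬ N.cov.Subdividing v) ∧
    ∃ l : List V, N.cov.IsPathFrom u v l ∧ 2 ≤ l.length ∧
      ∀ w ∈ l.tail.dropLast, N.cov.Subdividing w

/-- `N` is a rooted phylogenetic network on the finite nonempty leaf set `X`. -/
structure IsPhylo (N : Net V) (X : Set V) : Prop where
  finite : N.verts.Finite
  nonempty : X.Nonempty
  arc_mem : ∀ ⦃u v : V⦄, N.arc u v → u ∈ N.verts ∧ v ∈ N.verts
  acyclic : ∀ ⦃u v : V⦄, N.arc u v → ¬ N.reach v u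
  root_mem : N.root ∈ N.verts
  root_inDeg : N.inDeg N.root = 0
  root_unique : ∀ v ∈ N.verts, N.inDeg v = 0 → v = N.root
  leaves_eq : N.leaves = X
  leaf_inDeg : ∀ x ∈ X, N.inDeg x = 1
  interior_deg : ∀ v ∈ N.verts, v ≠ N.root → v ∉ X →
    (N.inDeg v = 1 ∧ 2 ≤ N.outDeg v) ∨ (N.outDeg v = 1 ∧ 2 ≤ N.inDeg v)

/-- `N` has no shortcuts: no arc `(u,v)` such that there is also a directed path
from `u` to `v` of length at least 2 (i.e. a path-list with at least 3 entries). -/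
def NoShortcuts (N : Net V) : Prop :=
  ∀ u v : V, N.arc u v → ¬ ∃ l : List V, N.IsPathFrom u v l ∧ 3 ≤ l.length

/-- Tree-child: every vertex is visible. -/
def TreeChild (N : Net V) : Prop := ∀ v ∈ N.verts, N.Visible v

/-- Normal: tree-child with no shortcuts. -/
def Normal (N : Net V) : Prop := N.TreeChild ∧ N.NoShortcuts

/-- A tree: every vertex has in-degree at most 1. -/
def IsTree (N : Net V) : Prop := ∀ v ∈ N.verts, N.inDeg v ≤ 1

/-- The cluster of `v`: the set of leaves reachable from `v`. -/
def cluster (N : Net V) (v : V) : Set V := {x ∈ N.leaves | N.reach v x}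

/-- The identifying set of `v`: the set of leaves `x` such that every directed
path from the root to `x` passes through `v`. -/
def ident (N : Net V) (v : V) : Set V :=
  {x ∈ N.leaves | ∀ l : List V, N.IsPathFrom N.root x l → v ∈ l}

/-- A digraph isomorphism between two networks, given by the map `f`. -/
def NetEquiv (M : Net V) (M' : Net W) (f : V → W) : Prop :=
  Set.BijOn f M.verts M'.verts ∧
    ∀ u ∈ M.verts, ∀ v ∈ M.verts, (M.arc u v ↔ M'.arc (f u) (f v))

/-- Two networks over the same ambient type are equivalent relative to a leaf set
`X` if there is a digraph isomorphism between them fixing each element of `X`. -/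
def EquivOn (M M' : Net V) (X : Set V) : Prop :=
  ∃ f : V → V, NetEquiv M M' f ∧ ∀ x ∈ X, f x = x

/-- `N₁ ⊕ N₂` : disjoint copies of `N₁` and `N₂` under a new root (`none`). -/
def oplus {V₁ V₂ : Type*} (N₁ : Net V₁) (N₂ : Net V₂) : Net (Option (V₁ ⊕ V₂)) where
  verts := insert none
    ((fun v => some (Sum.inl v)) '' N₁.verts ∪ (fun v => some (Sum.inr v)) '' N₂.verts)
  root := none
  arc a b :=
    match a, b with
    | none, some (Sum.inl w) => w = N₁.root
    | none, some (Sum.inr w) => w = N₂.root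
    | some (Sum.inl u), some (Sum.inl w) => N₁.arc u w
    | some (Sum.inr u), some (Sum.inr w) => N₂.arc u w
    | _, _ => False

/-- `N₁ ⊗ N₂` : identify each leaf `x` of `N₁` with the root of its own copy of `N₂`;
the copy of a non-leaf vertex `u` of `N₁` is `Sum.inl u`, and the vertex `w` of the
copy of `N₂` attached at leaf `x` of `N₁` is `Sum.inr (x, w)`. -/
def otimes {V₁ V₂ : Type*} (N₁ : Net V₁) (N₂ : Net V₂) : Net (V₁ ⊕ V₁ × V₂) where
  verts := Sum.inl '' (N₁.verts \ N₁.leaves) ∪ Sum.inr '' (N₁.leaves ×ˢ N₂.verts)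
  root := Sum.inl N₁.root
  arc a b :=
    match a, b with
    | Sum.inl u, Sum.inl w => N₁.arc u w ∧ w ∉ N₁.leaves
    | Sum.inl u, Sum.inr (x, w) => x ∈ N₁.leaves ∧ N₁.arc u x ∧ w = N₂.root
    | Sum.inr (x, w), Sum.inr (x', w') => x = x' ∧ x ∈ N₁.leaves ∧ N₂.arc w w'
    | _, _ => False

end Net

/-- A hierarchy: a collection of sets any two of which are disjoint or nested. -/
def IsHierarchy {V : Type*} (C : Set (Set V)) : Prop :=
  ∀ A ∈ C, ∀ B ∈ C, A ∩ B = ∅ ∨ A ⊆ B ∨ B ⊆ A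


/-!
A vertex `v` of `N` other than the root and the leaves has a unique parent or a unique child;
say a unique parent `p` (the other case is dual). Every root-to-leaf path through `v` passes
through `p`, so `p` is visible whenever `v` is, and hence `p` is the only parent of `v` in
`Cov(N)`. Walking backwards from `p` through subdividing vertices of `Cov(N)` is deterministic,
so every path of `Cov(N)` that ends at `v` and has subdividing interior starts at the same
non-subdividing vertex: `v` has in-degree at most one in `Ñ`.
-/

namespace List

variable {α : Type*} {r : α → α → Prop}

theorem IsChain.exists_rel_of_mem_of_head?_ne {l : List α} (hl : l.IsChain r) {a : α}
    (ha : a ∈ l) (hhead : l.head? ≠ some a) : ∃ z ∈ l, r z a := by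
  induction l with
  | nil => simp at ha
  | cons x t ih =>
    obtain _ | ⟨y, t⟩ := t
    · simp_all
    · rw [isChain_cons_cons] at hl
      by_cases hay : a = y
      · exact ⟨x, mem_cons_self, hay ▸ hl.1⟩
      · have hax : a ≠ x := fun h => hhead (by simp [h])
        obtain ⟨z, hz, hza⟩ := ih hl.2 (by simp_all) (by simpa using Ne.symm hay)
        exact ⟨z, mem_cons_of_mem _ hz, hza⟩

theorem IsChain.exists_rel_of_mem_of_getLast?_ne {l : List α} (hl : l.IsChain r) {a : α}
    (ha : a ∈ l) (hlast : l.getLast? ≠ some a) : ∃ z ∈ l, r a z := by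
  have hrev : l.reverse.IsChain (fun x y => r y x) := isChain_reverse.2 hl
  obtain ⟨z, hz, hza⟩ :=
    hrev.exists_rel_of_mem_of_head?_ne (mem_reverse.2 ha) (by simpa using hlast)
  exact ⟨z, mem_reverse.1 hz, hza⟩

theorem IsChain.eq_of_functionalOn {S : Set α}
    (hr : ∀ x ∈ S, ∀ y z, r x y → r x z → y = z) :
    ∀ {l₁ l₂ : List α}, l₁.IsChain r → l₂.IsChain r → l₁.head? = l₂.head? →
      (∀ x ∈ l₁.dropLast, x ∈ S) → (∀ x ∈ l₁.getLast?, x ∉ S) →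
      (∀ x ∈ l₂.dropLast, x ∈ S) → (∀ x ∈ l₂.getLast?, x ∉ S) → l₁ = l₂
  | [], [], _, _, _, _, _, _, _ => rfl
  | [], _ :: _, _, _, h, _, _, _, _ | _ :: _, [], _, _, h, _, _, _, _ => by simp at h
  | [_], [_], _, _, h, _, _, _, _ => by simpa using h
  | [x], _ :: _ :: _, _, _, h, _, hx, hS, _ => by
    simp only [head?_cons, Option.some.injEq] at h
    exact absurd (hS x (by simp [h])) (hx x rfl)
  | _ :: _ :: _, [y], _, _, h, hS, _, _, hy => by
    simp only [head?_cons, Option.some.injEq] at h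
    exact absurd (hS y (by simp [h])) (hy y rfl)
  | x :: x' :: l₁, y :: y' :: l₂, h₁, h₂, h, hS₁, hl₁, hS₂, hl₂ => by
    simp only [head?_cons, Option.some.injEq] at h
    subst h
    rw [isChain_cons_cons] at h₁ h₂
    have hx' : x' = y' := hr x (hS₁ x (by simp)) _ _ h₁.1 h₂.1
    subst hx'
    have := IsChain.eq_of_functionalOn hr h₁.2 h₂.2 rfl
      (fun z hz => hS₁ z (by simp [hz])) (by simpa using hl₁)
      (fun z hz => hS₂ z (by simp [hz])) (by simpa using hl₂)
    rw [this]

end List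

theorem Set.Subsingleton.ncard_le_one {α : Type*} {s : Set α} (h : s.Subsingleton) :
    s.ncard ≤ 1 :=
  (Set.ncard_le_one h.finite).2 fun _ ha _ hb => h ha hb

theorem Set.subsingleton_of_ncard_eq_one {α : Type*} {s : Set α} (h : s.ncard = 1) :
    s.Subsingleton := by
  obtain ⟨a, rfl⟩ := Set.ncard_eq_one.1 h
  exact Set.subsingleton_singleton

namespace Net

variable {V : Type*}

def reverse (M : Net V) : Net V where
  verts := M.verts
  root := M.root
  arc u v := M.arc v u

/-- The arcs of `N.normalise` are the `N.cov`-subdivided arcs between its vertices. -/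
def IsSubdividedArc (M : Net V) (u v : V) (l : List V) : Prop :=
  M.IsPathFrom u v l ∧ 2 ≤ l.length ∧ ∀ w ∈ l.tail.dropLast, M.Subdividing w

variable {M : Net V} {u v a b : V} {l la lb : List V}

theorem subdividing_reverse : M.reverse.Subdividing v ↔ M.Subdividing v :=
  and_comm

theorem Subdividing.children_subsingleton (h : M.Subdividing v) :
    {w | M.arc v w}.Subsingleton :=
  Set.subsingleton_of_ncard_eq_one h.2

theorem IsSubdividedArc.reverse (h : M.IsSubdividedArc u v l) :
    M.reverse.IsSubdividedArc v u l.reverse := by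
  obtain ⟨⟨hc, hu, hv⟩, hlen, hint⟩ := h
  refine ⟨⟨List.isChain_reverse.2 hc, by simpa using hv, by simpa using hu⟩,
    by simpa using hlen, fun w hw => subdividing_reverse.2 (hint w ?_)⟩
  simpa [← List.tail_dropLast] using hw

theorem IsSubdividedArc.exists_eq_cons (h : M.IsSubdividedArc u v l) :
    ∃ x t, l = u :: x :: t ∧ M.arc u x ∧ (x :: t).IsChain M.arc ∧
      (∀ w ∈ (x :: t).dropLast, M.Subdividing w) ∧ (x :: t).getLast? = some v := by
  obtain ⟨⟨hc, hu, hv⟩, hlen, hint⟩ := h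
  obtain _ | ⟨u', _ | ⟨x, t⟩⟩ := l
  · simp at hlen
  · simp at hlen
  · simp only [List.head?_cons, Option.some.injEq] at hu
    subst hu
    rw [List.Chain', List.isChain_cons_cons] at hc
    exact ⟨x, t, rfl, hc.1, hc.2, hint, by simpa using hv⟩

theorem IsSubdividedArc.eq_of_children_subsingleton (hv : {w | M.arc v w}.Subsingleton)
    (ha : ¬ M.Subdividing a) (hb : ¬ M.Subdividing b)
    (hla : M.IsSubdividedArc v a la) (hlb : M.IsSubdividedArc v b lb) : a = b := by
  obtain ⟨x, ta, -, hvx, hca, hinta, hlasta⟩ := hla.exists_eq_cons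
  obtain ⟨y, tb, -, hvy, hcb, hintb, hlastb⟩ := hlb.exists_eq_cons
  obtain rfl : x = y := hv hvx hvy
  have htail : x :: ta = x :: tb :=
    hca.eq_of_functionalOn (S := {w | M.Subdividing w})
      (fun w hw _ _ h₁ h₂ => hw.children_subsingleton h₁ h₂) hcb rfl
      hinta (by simpa [hlasta] using ha) hintb (by simpa [hlastb] using hb)
  simpa [htail, hlastb] using hlasta.symm

theorem IsSubdividedArc.eq_of_parents_subsingleton (hv : {w | M.arc w v}.Subsingleton)
    (ha : ¬ M.Subdividing a) (hb : ¬ M.Subdividing b)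
    (hla : M.IsSubdividedArc a v la) (hlb : M.IsSubdividedArc b v lb) : a = b :=
  hla.reverse.eq_of_children_subsingleton (M := M.reverse) hv (mt subdividing_reverse.1 ha)
    (mt subdividing_reverse.1 hb) hlb.reverse

theorem normalise_parents_subsingleton {N : Net V} (h : {u | N.cov.arc u v}.Subsingleton) :
    {u | N.normalise.arc u v}.Subsingleton :=
  fun _ ⟨⟨_, ha⟩, _, _, hla⟩ _ ⟨⟨_, hb⟩, _, _, hlb⟩ =>
    IsSubdividedArc.eq_of_parents_subsingleton h ha hb hla hlb

theorem normalise_children_subsingleton {N : Net V} (h : {w | N.cov.arc v w}.Subsingleton) :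
    {w | N.normalise.arc v w}.Subsingleton :=
  fun _ ⟨_, ⟨_, ha⟩, _, hla⟩ _ ⟨_, ⟨_, hb⟩, _, hlb⟩ =>
    IsSubdividedArc.eq_of_children_subsingleton h ha hb hla hlb

namespace IsPhylo

variable {N : Net V} {X : Set V} {p c w : V}

theorem ne_of_arc (hN : N.IsPhylo X) (h : N.arc u v) : u ≠ v := by
  rintro rfl
  exact hN.acyclic h .refl

theorem not_arc_root (hN : N.IsPhylo X) (u : V) : ¬ N.arc u N.root := by
  have hfin : {w | N.arc w N.root}.Finite := hN.finite.subset fun _ hw => (hN.arc_mem hw).1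
  exact Set.eq_empty_iff_forall_notMem.1 ((Set.ncard_eq_zero hfin).1 hN.root_inDeg) u

theorem not_arc_of_mem_leaves (hN : N.IsPhylo X) (hv : v ∈ N.leaves) (w : V) :
    ¬ N.arc v w := by
  have hfin : {w | N.arc v w}.Finite := hN.finite.subset fun _ hw => (hN.arc_mem hw).2
  exact Set.eq_empty_iff_forall_notMem.1 ((Set.ncard_eq_zero hfin).1 hv.2) w

theorem parents_subsingleton_or_children_subsingleton (hN : N.IsPhylo X) (hv : v ∈ N.verts) :
    {u | N.arc u v}.Subsingleton ∨ {w | N.arc v w}.Subsingleton := by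
  by_cases hroot : v = N.root
  · subst hroot
    exact .inl fun u hu => absurd hu (hN.not_arc_root u)
  by_cases hleaf : v ∈ X
  · exact .inr fun w hw => absurd hw (hN.not_arc_of_mem_leaves (hN.leaves_eq ▸ hleaf) w)
  rcases hN.interior_deg v hv hroot hleaf with ⟨hin, -⟩ | ⟨hout, -⟩
  · exact .inl (Set.subsingleton_of_ncard_eq_one hin)
  · exact .inr (Set.subsingleton_of_ncard_eq_one hout)

theorem visible_parent (hN : N.IsPhylo X) (hv : N.Visible v)
    (hpar : {u | N.arc u v}.Subsingleton) (hp : N.arc p v) : N.Visible p := by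
  obtain ⟨-, y, hy, hpaths⟩ := hv
  refine ⟨(hN.arc_mem hp).1, y, hy, fun l hl => ?_⟩
  have hhead : l.head? ≠ some v := by
    rw [hl.2.1]
    rintro ⟨⟩
    exact hN.not_arc_root p hp
  obtain ⟨z, hz, hzv⟩ := List.IsChain.exists_rel_of_mem_of_head?_ne hl.1 (hpaths l hl) hhead
  exact hpar hzv hp ▸ hz

theorem visible_child (hN : N.IsPhylo X) (hv : N.Visible v)
    (hchild : {w | N.arc v w}.Subsingleton) (hc : N.arc v c) : N.Visible c := by
  obtain ⟨-, y, hy, hpaths⟩ := hv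
  refine ⟨(hN.arc_mem hc).2, y, hy, fun l hl => ?_⟩
  have hlast : l.getLast? ≠ some v := by
    rw [hl.2.2]
    rintro ⟨⟩
    exact hN.not_arc_of_mem_leaves hy c hc
  obtain ⟨z, hz, hvz⟩ := List.IsChain.exists_rel_of_mem_of_getLast?_ne hl.1 (hpaths l hl) hlast
  exact hchild hvz hc ▸ hz

theorem cov_parent_eq (hN : N.IsPhylo X) (hv : N.Visible v)
    (hpar : {u | N.arc u v}.Subsingleton) (hw : N.cov.arc w v) (hp : N.arc p v) : w = p := by
  obtain ⟨-, -, hwv, hreach, hbetween⟩ := hw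
  obtain hvw | ⟨z, hwz, hzv⟩ := hreach.cases_tail
  · exact absurd hvw.symm hwv
  obtain rfl := hpar hzv hp
  by_contra hwz'
  exact hbetween
    ⟨z, hN.visible_parent hv hpar hzv, Ne.symm hwz', hN.ne_of_arc hzv, hwz, .single hzv⟩

theorem cov_child_eq (hN : N.IsPhylo X) (hv : N.Visible v)
    (hchild : {w | N.arc v w}.Subsingleton) (hw : N.cov.arc v w) (hc : N.arc v c) : w = c := by
  obtain ⟨-, -, hvw, hreach, hbetween⟩ := hw
  obtain hvw' | ⟨z, hvz, hzw⟩ := hreach.cases_head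
  · exact absurd hvw' hvw
  obtain rfl := hchild hvz hc
  by_contra hwz
  exact hbetween ⟨z, hN.visible_child hv hchild hvz, (hN.ne_of_arc hvz).symm, hwz ∘ Eq.symm,
    .single hvz, hzw⟩

theorem cov_parents_subsingleton (hN : N.IsPhylo X) (hv : N.Visible v)
    (hpar : {u | N.arc u v}.Subsingleton) : {u | N.cov.arc u v}.Subsingleton := by
  intro w₁ hw₁ w₂ hw₂
  obtain hvw | ⟨p, -, hp⟩ := hw₁.2.2.2.1.cases_tail
  · exact absurd hvw.symm hw₁.2.2.1
  exact (hN.cov_parent_eq hv hpar hw₁ hp).trans (hN.cov_parent_eq hv hpar hw₂ hp).symm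

theorem cov_children_subsingleton (hN : N.IsPhylo X) (hv : N.Visible v)
    (hchild : {w | N.arc v w}.Subsingleton) : {w | N.cov.arc v w}.Subsingleton := by
  intro w₁ hw₁ w₂ hw₂
  obtain hvw | ⟨c, hc, -⟩ := hw₁.2.2.2.1.cases_head
  · exact absurd hvw hw₁.2.2.1
  exact (hN.cov_child_eq hv hchild hw₁ hc).trans (hN.cov_child_eq hv hchild hw₂ hc).symm

theorem normalise_parents_subsingleton_or_children_subsingleton (hN : N.IsPhylo X) (v : V) :
    {u | N.normalise.arc u v}.Subsingleton ∨ {w | N.normalise.arc v w}.Subsingleton := by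
  by_cases hv : N.Visible v
  · exact (hN.parents_subsingleton_or_children_subsingleton hv.1).imp
      (fun hpar => normalise_parents_subsingleton (hN.cov_parents_subsingleton hv hpar))
      (fun hchild => normalise_children_subsingleton (hN.cov_children_subsingleton hv hchild))
  · exact .inl fun _ hu => absurd hu.2.1.1 hv

end IsPhylo

end Net

theorem stmt3 {V : Type*} (N : Net V) (X : Set V) (hN : N.IsPhylo X) :
    ∀ v : V, ¬ (2 ≤ N.normalise.inDeg v ∧ 2 ≤ N.normalise.outDeg v) := by
  rintro v ⟨hin, hout⟩
  rcases hN.normalise_parents_subsingleton_or_children_subsingleton v with h | h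
  · exact lt_irrefl _ (h.ncard_le_one.trans_lt hin)
  · exact lt_irrefl _ (h.ncard_le_one.trans_lt hout)
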